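/- arXiv:2404.12030 — 6 statements merged into one kernel-verified Lean document; each statement's English description precedes it below -/
import Mathlib

section
/- Let H ∈ ℝ^{N×N} be symmetric positive definite, F ∈ ℝ^{N×n}, G ∈ ℝ^{c×N}, S_u ∈ ℝ^{c×n}, w ∈ ℝ^{c}, x ∈ ℝ^{n}, and set S = S_u + G H⁻¹ F. Suppose y ∈ ℝ^{c} satisfies the implicit equation y − (I − G H⁻¹ Gᵀ) r(y) = −(S x + w), where r is the componentwise ReLU. Then u* = −H⁻¹ F x − H⁻¹ Gᵀ r(y) is feasible, i.e. G u* ≤ S_u x + w componentwise, and u* is the unique minimizer of the quadratic program min_u uᵀ H u + 2 uᵀ F x subject to G u ≤ S_u x + w; that is, every feasible u ≠ u* satisfies uᵀ H u + 2 uᵀ F x > u*ᵀ H u* + 2 u*ᵀ F x. -/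
open Matrix

/-- Componentwise ReLU (ramp) function. -/
noncomputable def relu {c : ℕ} (v : Fin c → ℝ) : Fin c → ℝ := fun i => max (v i) 0

/-- If `y` solves the implicit equation `y - (I - G H⁻¹ Gᵀ) r(y) = -(S x + w)` with
`S = S_u + G H⁻¹ F`, then `u* = -H⁻¹ F x - H⁻¹ Gᵀ r(y)` is feasible and is the unique
minimizer of the MPC-QP. -/
theorem mpc_implicit_eq_gives_unique_minimizer {N n c : ℕ}
    (H : Matrix (Fin N) (Fin N) ℝ) (F : Matrix (Fin N) (Fin n) ℝ)
    (G : Matrix (Fin c) (Fin N) ℝ) (Su : Matrix (Fin c) (Fin n) ℝ)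
    (w : Fin c → ℝ) (x : Fin n → ℝ)
    (hH : H.PosDef)
    (S : Matrix (Fin c) (Fin n) ℝ) (hS : S = Su + G * H⁻¹ * F)
    (y : Fin c → ℝ)
    (hy : y - (1 - G * H⁻¹ * Gᵀ).mulVec (relu y) = -(S.mulVec x + w))
    (ustar : Fin N → ℝ)
    (hustar : ustar = -(H⁻¹.mulVec (F.mulVec x)) - H⁻¹.mulVec (Gᵀ.mulVec (relu y))) :
    (∀ i, G.mulVec ustar i ≤ (Su.mulVec x + w) i) ∧
    ∀ u : Fin N → ℝ, (∀ i, G.mulVec u i ≤ (Su.mulVec x + w) i) → u ≠ ustar →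
      ustar ⬝ᵥ H.mulVec ustar + 2 * (ustar ⬝ᵥ F.mulVec x) <
        u ⬝ᵥ H.mulVec u + 2 * (u ⬝ᵥ F.mulVec x) := by
  have hHdet : IsUnit H.det := hH.det_pos.ne'.isUnit
  have hHinv : H * H⁻¹ = 1 := Matrix.mul_nonsing_inv H hHdet
  set lam := relu y with hlam
  have hlam_nonneg : ∀ i, 0 ≤ lam i := fun i => le_max_right _ _
  -- stationarity: H u* = -F x - Gᵀ lam
  have hHu : H.mulVec ustar = -(F.mulVec x) - Gᵀ.mulVec lam := by
    rw [hustar]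
    simp [Matrix.mulVec_sub, Matrix.mulVec_neg, Matrix.mulVec_mulVec, ← Matrix.mul_assoc, hHinv]
  -- G u*
  have hGu : G.mulVec ustar = -((G * H⁻¹ * F).mulVec x) - (G * H⁻¹ * Gᵀ).mulVec lam := by
    rw [hustar]
    simp [Matrix.mulVec_sub, Matrix.mulVec_neg, Matrix.mulVec_mulVec, Matrix.mul_assoc]
  -- slack identity
  have hslack : ∀ i, (Su.mulVec x + w) i - G.mulVec ustar i = max (y i) 0 - y i := by
    intro i
    have h1 := congrFun hy i
    simp only [Pi.sub_apply, Pi.neg_apply, Pi.add_apply, Matrix.sub_mulVec,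
      Matrix.one_mulVec, hS, Matrix.add_mulVec] at h1 ⊢
    rw [hGu]
    have hlami : lam i = max (y i) 0 := rfl
    simp only [Pi.sub_apply, Pi.neg_apply, Pi.add_apply] at *
    linarith [h1]
  have hfeas : ∀ i, G.mulVec ustar i ≤ (Su.mulVec x + w) i := by
    intro i
    have := hslack i
    have h2 : 0 ≤ max (y i) 0 - y i := by
      rcases le_total (y i) 0 with h | h
      · simp [max_eq_right h]; linarith
      · simp [max_eq_left h]
    linarith
  refine ⟨hfeas, ?_⟩
  intro u hu hne
  set d := u - ustar with hd
  have hdne : d ≠ 0 := sub_ne_zero.mpr hne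
  have hdu : u = ustar + d := by simp [hd]
  -- symmetry of H in dot products
  have hHt : Hᵀ = H := by
    have := hH.1
    simpa [Matrix.IsHermitian, Matrix.conjTranspose_eq_transpose_of_trivial] using this
  have hsym : ∀ a b : Fin N → ℝ, a ⬝ᵥ H.mulVec b = b ⬝ᵥ H.mulVec a := by
    intro a b
    rw [Matrix.dotProduct_mulVec, ← Matrix.mulVec_transpose, hHt, dotProduct_comm]
  -- complementary slackness: (G d ⬝ᵥ lam) ≤ 0
  have hcs : G.mulVec d ⬝ᵥ lam ≤ 0 := by
    unfold dotProduct
    apply Finset.sum_nonpos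
    intro i _
    have hGd : G.mulVec d i = G.mulVec u i - G.mulVec ustar i := by
      simp [hd, Matrix.mulVec_sub]
    have hle : G.mulVec d i ≤ max (y i) 0 - y i := by
      rw [hGd]
      have := hslack i
      have := hu i
      linarith
    have hzero : max (y i) 0 * (max (y i) 0 - y i) = 0 := by
      rcases le_total (y i) 0 with h | h
      · simp [max_eq_right h]
      · simp [max_eq_left h]
    have hlami : lam i = max (y i) 0 := rfl
    calc G.mulVec d i * lam i ≤ (max (y i) 0 - y i) * lam i := by
          apply mul_le_mul_of_nonneg_right hle (hlam_nonneg i)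
      _ = 0 := by rw [hlami]; linarith [hzero]
  -- positive definiteness
  have hpos : 0 < d ⬝ᵥ H.mulVec d := by
    have := hH.dotProduct_mulVec_pos hdne
    simpa using this
  -- expansion
  have hlin : d ⬝ᵥ (H.mulVec ustar + F.mulVec x) = -(G.mulVec d ⬝ᵥ lam) := by
    rw [hHu]
    have : -(F.mulVec x) - Gᵀ.mulVec lam + F.mulVec x = -(Gᵀ.mulVec lam) := by ring
    rw [this, dotProduct_neg, Matrix.dotProduct_mulVec, Matrix.vecMul_transpose]
  have hexp : u ⬝ᵥ H.mulVec u + 2 * (u ⬝ᵥ F.mulVec x) =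
      ustar ⬝ᵥ H.mulVec ustar + 2 * (ustar ⬝ᵥ F.mulVec x) + d ⬝ᵥ H.mulVec d
        + 2 * (d ⬝ᵥ (H.mulVec ustar + F.mulVec x)) := by
    rw [hdu]
    simp only [Matrix.mulVec_add, add_dotProduct, dotProduct_add,
      hsym d ustar]
    ring
  rw [hexp, hlin]
  nlinarith [hpos, hcs]
end

section
/- Let H ∈ ℝ^{N×N} be symmetric positive definite, F ∈ ℝ^{N×n}, G ∈ ℝ^{c×N}, S_u ∈ ℝ^{c×n}, w ∈ ℝ^{c}, x ∈ ℝ^{n}, and set S = S_u + G H⁻¹ F. Suppose u ∈ ℝ^{N} and λ ∈ ℝ^{c} satisfy the Karush–Kuhn–Tucker conditions: λ ≥ 0 componentwise, H u + F x + Gᵀ λ = 0, S_u x + w − G u ≥ 0 componentwise, and λ_i (S_u x + w − G u)_i = 0 for each component i. Then the vector y = λ − (S x + w + G H⁻¹ Gᵀ λ) satisfies r(y) = λ and solves the implicit equation y − (I − G H⁻¹ Gᵀ) r(y) = −(S x + w), and moreover u = −H⁻¹ F x − H⁻¹ Gᵀ r(y). -/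
open Matrix

/-- If `(u, λ)` satisfies the KKT conditions of the MPC-QP, then
`y = λ - (S x + w + G H⁻¹ Gᵀ λ)` satisfies `r(y) = λ`, solves the implicit equation
`y - (I - G H⁻¹ Gᵀ) r(y) = -(S x + w)`, and `u = -H⁻¹ F x - H⁻¹ Gᵀ r(y)`. -/
theorem mpc_kkt_gives_implicit_solution {N n c : ℕ}
    (H : Matrix (Fin N) (Fin N) ℝ) (F : Matrix (Fin N) (Fin n) ℝ)
    (G : Matrix (Fin c) (Fin N) ℝ) (Su : Matrix (Fin c) (Fin n) ℝ)
    (w : Fin c → ℝ) (x : Fin n → ℝ)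
    (hH : H.PosDef)
    (S : Matrix (Fin c) (Fin n) ℝ) (hS : S = Su + G * H⁻¹ * F)
    (u : Fin N → ℝ) (lam : Fin c → ℝ)
    (hlam_nonneg : ∀ i, 0 ≤ lam i)
    (hstat : H.mulVec u + F.mulVec x + Gᵀ.mulVec lam = 0)
    (hfeas : ∀ i, 0 ≤ (Su.mulVec x + w - G.mulVec u) i)
    (hcomp : ∀ i, lam i * (Su.mulVec x + w - G.mulVec u) i = 0)
    (y : Fin c → ℝ)
    (hy : y = lam - (S.mulVec x + w + (G * H⁻¹ * Gᵀ).mulVec lam)) :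
    relu y = lam ∧
    y - (1 - G * H⁻¹ * Gᵀ).mulVec (relu y) = -(S.mulVec x + w) ∧
    u = -(H⁻¹.mulVec (F.mulVec x)) - H⁻¹.mulVec (Gᵀ.mulVec (relu y)) := by
  have hdet : IsUnit H.det := isUnit_iff_ne_zero.mpr (ne_of_gt hH.det_pos)
  have hinv : H⁻¹ * H = 1 := Matrix.nonsing_inv_mul H hdet
  have h1 : H.mulVec u = -(F.mulVec x + Gᵀ.mulVec lam) := by
    rw [add_assoc] at hstat
    exact eq_neg_of_add_eq_zero_left hstat
  have hu : u = -(H⁻¹.mulVec (F.mulVec x + Gᵀ.mulVec lam)) := by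
    calc u = (H⁻¹ * H).mulVec u := by rw [hinv, Matrix.one_mulVec]
    _ = H⁻¹.mulVec (H.mulVec u) := by rw [← Matrix.mulVec_mulVec]
    _ = -(H⁻¹.mulVec (F.mulVec x + Gᵀ.mulVec lam)) := by rw [h1, Matrix.mulVec_neg]
  have hs : Su.mulVec x + w - G.mulVec u
      = S.mulVec x + w + (G * H⁻¹ * Gᵀ).mulVec lam := by
    rw [hu, hS]
    funext i
    simp [Matrix.add_mulVec, Matrix.mulVec_add, ← Matrix.mulVec_mulVec, Matrix.mulVec_neg]
    ring
  have hfeas' : ∀ i, 0 ≤ (S.mulVec x + w + (G * H⁻¹ * Gᵀ).mulVec lam) i := by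
    rw [← hs]; exact hfeas
  have hcomp' : ∀ i, lam i * (S.mulVec x + w + (G * H⁻¹ * Gᵀ).mulVec lam) i = 0 := by
    rw [← hs]; exact hcomp
  have hrelu : relu y = lam := by
    funext i
    subst hy
    simp only [relu, Pi.sub_apply]
    rcases eq_or_lt_of_le (hlam_nonneg i) with h0 | hpos
    · rw [← h0, zero_sub]
      exact max_eq_right (neg_nonpos.mpr (hfeas' i))
    · have hz : (S.mulVec x + w + (G * H⁻¹ * Gᵀ).mulVec lam) i = 0 := by
        have := hcomp' i
        exact (mul_eq_zero.mp this).resolve_left (ne_of_gt hpos)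
      rw [hz, sub_zero]
      exact max_eq_left (hlam_nonneg i)
  refine ⟨hrelu, ?_, ?_⟩
  · rw [hrelu, hy]
    funext i
    simp [Matrix.sub_mulVec, Matrix.one_mulVec]
  · rw [hrelu, hu]
    funext i
    simp [Matrix.mulVec_add]
    ring
end

section
/- Let M ∈ ℝ^{c×c} and q ∈ ℝ^{c}. If y ∈ ℝ^{c} satisfies the implicit equation y − (I − M) r(y) = −q, where r is the componentwise ReLU, then λ = r(y) solves the linear complementarity problem LCP(q, M): λ ≥ 0 componentwise, q + M λ ≥ 0 componentwise, and λ_i (q + M λ)_i = 0 for each component i. -/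
open Matrix

/-- If `y` solves the implicit equation `y - (I - M) r(y) = -q`, then `λ = r(y)` solves the
linear complementarity problem LCP(q, M). -/
theorem implicit_eq_solves_LCP {c : ℕ} (M : Matrix (Fin c) (Fin c) ℝ) (q : Fin c → ℝ)
    (y : Fin c → ℝ)
    (hy : y - (1 - M).mulVec (relu y) = -q) :
    (∀ i, 0 ≤ relu y i) ∧
    (∀ i, 0 ≤ (q + M.mulVec (relu y)) i) ∧
    ∀ i, relu y i * (q + M.mulVec (relu y)) i = 0 := by
  have key : ∀ i, (q + M.mulVec (relu y)) i = relu y i - y i := by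
    intro i
    have h := congrFun hy i
    simp only [Pi.sub_apply, Pi.neg_apply, sub_mulVec, one_mulVec] at h
    simp only [Pi.add_apply]
    linarith
  refine ⟨fun i => le_max_right _ _, fun i => ?_, fun i => ?_⟩
  · rw [key]; simp [relu]
  · rw [key]
    rcases le_or_gt (y i) 0 with h | h
    · simp [relu, max_eq_right h]
    · simp [relu, max_eq_left h.le]
end

section
/- Let M ∈ ℝ^{c×c} and q ∈ ℝ^{c}. If λ ∈ ℝ^{c} solves the linear complementarity problem LCP(q, M), i.e. λ ≥ 0 componentwise, q + M λ ≥ 0 componentwise, and λ_i (q + M λ)_i = 0 for each component i, then y = λ − (q + M λ) satisfies r(y) = λ (with r the componentwise ReLU) and solves the implicit equation y − (I − M) r(y) = −q. -/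
open Matrix

/-- If `λ` solves the linear complementarity problem LCP(q, M), then `y = λ - (q + M λ)`
satisfies `r(y) = λ` and solves the implicit equation `y - (I - M) r(y) = -q`. -/
theorem LCP_solves_implicit_eq {c : ℕ} (M : Matrix (Fin c) (Fin c) ℝ) (q : Fin c → ℝ)
    (lam : Fin c → ℝ)
    (hlam_nonneg : ∀ i, 0 ≤ lam i)
    (hq_nonneg : ∀ i, 0 ≤ (q + M.mulVec lam) i)
    (hcomp : ∀ i, lam i * (q + M.mulVec lam) i = 0)
    (y : Fin c → ℝ) (hy : y = lam - (q + M.mulVec lam)) :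
    relu y = lam ∧ y - (1 - M).mulVec (relu y) = -q := by
  have hr : relu y = lam := by
    funext i
    simp only [relu, hy, Pi.sub_apply]
    rcases mul_eq_zero.mp (hcomp i) with h | h
    · have := hq_nonneg i
      simp only [Pi.add_apply] at this
      simp [h]; linarith
    · have := hlam_nonneg i
      simp [h]; linarith
  refine ⟨hr, ?_⟩
  rw [hr, hy]
  funext i
  simp [Matrix.sub_mulVec, Matrix.one_mulVec]
end

section
/- Let H ∈ ℝ^{N×N} be symmetric positive definite, F ∈ ℝ^{N×n}, G ∈ ℝ^{c×N}, S_u ∈ ℝ^{c×n}, w ∈ ℝ^{c}, x ∈ ℝ^{n}, and set S = S_u + G H⁻¹ F. If λ ∈ ℝ^{c} solves the linear complementarity problem LCP(Sx + w, GH⁻¹Gᵀ), i.e. λ ≥ 0, Sx + w + GH⁻¹Gᵀλ ≥ 0 componentwise, and λ_i (Sx + w + GH⁻¹Gᵀλ)_i = 0 for each i, then u = −H⁻¹ F x − H⁻¹ Gᵀ λ is the unique minimizer of uᵀ H u + 2 uᵀ F x over {v ∈ ℝ^N : G v ≤ S_u x + w}. -/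
open Matrix

/-- If `λ` solves the linear complementarity problem LCP(Sx + w, G H⁻¹ Gᵀ) with
`S = S_u + G H⁻¹ F`, then `u = -H⁻¹ F x - H⁻¹ Gᵀ λ` is the unique minimizer of
`uᵀ H u + 2 uᵀ F x` over `{v : G v ≤ S_u x + w}`. -/
theorem mpc_LCP_gives_unique_minimizer {N n c : ℕ}
    (H : Matrix (Fin N) (Fin N) ℝ) (F : Matrix (Fin N) (Fin n) ℝ)
    (G : Matrix (Fin c) (Fin N) ℝ) (Su : Matrix (Fin c) (Fin n) ℝ)
    (w : Fin c → ℝ) (x : Fin n → ℝ)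
    (hH : H.PosDef)
    (S : Matrix (Fin c) (Fin n) ℝ) (hS : S = Su + G * H⁻¹ * F)
    (lam : Fin c → ℝ)
    (hlam_nonneg : ∀ i, 0 ≤ lam i)
    (hq_nonneg : ∀ i, 0 ≤ (S.mulVec x + w + (G * H⁻¹ * Gᵀ).mulVec lam) i)
    (hcomp : ∀ i, lam i * (S.mulVec x + w + (G * H⁻¹ * Gᵀ).mulVec lam) i = 0)
    (u : Fin N → ℝ)
    (hu : u = -(H⁻¹.mulVec (F.mulVec x)) - H⁻¹.mulVec (Gᵀ.mulVec lam)) :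
    (∀ i, G.mulVec u i ≤ (Su.mulVec x + w) i) ∧
    ∀ v : Fin N → ℝ, (∀ i, G.mulVec v i ≤ (Su.mulVec x + w) i) → v ≠ u →
      u ⬝ᵥ H.mulVec u + 2 * (u ⬝ᵥ F.mulVec x) <
        v ⬝ᵥ H.mulVec v + 2 * (v ⬝ᵥ F.mulVec x) := by
  have hdet : IsUnit H.det := isUnit_iff_ne_zero.mpr (ne_of_gt hH.det_pos)
  have hHinv : H * H⁻¹ = 1 := Matrix.mul_nonsing_inv H hdet
  -- H u = -(F x) - Gᵀ lam
  have hinv_cancel : ∀ y : Fin N → ℝ, H.mulVec (H⁻¹.mulVec y) = y := by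
    intro y; rw [Matrix.mulVec_mulVec, hHinv, Matrix.one_mulVec]
  have hHu : H.mulVec u = -(F.mulVec x) - Gᵀ.mulVec lam := by
    rw [hu, Matrix.mulVec_sub, Matrix.mulVec_neg, hinv_cancel, hinv_cancel]
  -- G u expanded
  have hGu : G.mulVec u = -((G * H⁻¹ * F).mulVec x) - (G * H⁻¹ * Gᵀ).mulVec lam := by
    rw [hu, Matrix.mulVec_sub, Matrix.mulVec_neg, Matrix.mulVec_mulVec,
      Matrix.mulVec_mulVec, ← Matrix.mulVec_mulVec x (G * H⁻¹) F,
      ← Matrix.mulVec_mulVec lam (G * H⁻¹) Gᵀ, Matrix.mulVec_mulVec,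
      Matrix.mulVec_mulVec]
  -- slack identity
  have hslack : ∀ i, (Su.mulVec x + w) i - G.mulVec u i
      = (S.mulVec x + w + (G * H⁻¹ * Gᵀ).mulVec lam) i := by
    intro i
    rw [hS]
    simp only [hGu, Matrix.add_mulVec, Pi.add_apply, Pi.sub_apply, Pi.neg_apply]
    ring
  have hfeas : ∀ i, G.mulVec u i ≤ (Su.mulVec x + w) i := by
    intro i
    have := hq_nonneg i
    rw [← hslack i] at this
    linarith
  refine ⟨hfeas, ?_⟩
  intro v hv hvu
  set d : Fin N → ℝ := v - u with hd_def
  have hd : d ≠ 0 := sub_ne_zero.mpr hvu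
  have hpos : 0 < d ⬝ᵥ H.mulVec d := by have := hH.dotProduct_mulVec_pos hd; simpa using this
  -- symmetry
  have hHsymm : Hᵀ = H := hH.1
  have hsym : u ⬝ᵥ H.mulVec v = v ⬝ᵥ H.mulVec u := by
    rw [Matrix.dotProduct_mulVec, ← Matrix.mulVec_transpose, hHsymm, dotProduct_comm]
  -- expansion
  have hexp : d ⬝ᵥ H.mulVec d
      = v ⬝ᵥ H.mulVec v - 2 * (v ⬝ᵥ H.mulVec u) + u ⬝ᵥ H.mulVec u := by
    simp only [hd_def, Matrix.mulVec_sub, sub_dotProduct, dotProduct_sub]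
    linarith [hsym]
  -- linear term
  have hdotGt : d ⬝ᵥ Gᵀ.mulVec lam = lam ⬝ᵥ (G.mulVec v - G.mulVec u) := by
    rw [Matrix.dotProduct_mulVec, ← Matrix.mulVec_transpose, Matrix.transpose_transpose,
      dotProduct_comm, hd_def, Matrix.mulVec_sub]
  have hlamle : lam ⬝ᵥ (G.mulVec v - G.mulVec u) ≤ 0 := by
    have : ∀ i, lam i * (G.mulVec v - G.mulVec u) i ≤ 0 := by
      intro i
      have h1 : lam i * ((Su.mulVec x + w) i - G.mulVec u i) = 0 := by
        rw [hslack i]; exact hcomp i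
      have h2 : lam i * (G.mulVec v i - (Su.mulVec x + w) i) ≤ 0 :=
        mul_nonpos_of_nonneg_of_nonpos (hlam_nonneg i) (by linarith [hv i])
      have : (G.mulVec v - G.mulVec u) i
          = (G.mulVec v i - (Su.mulVec x + w) i) + ((Su.mulVec x + w) i - G.mulVec u i) := by
        simp only [Pi.sub_apply]; ring
      rw [this]; nlinarith
    calc lam ⬝ᵥ (G.mulVec v - G.mulVec u) = ∑ i, lam i * (G.mulVec v - G.mulVec u) i := rfl
      _ ≤ 0 := Finset.sum_nonpos (fun i _ => this i)
  -- combine: v ⬝ᵥ H v + 2 v⬝Fx - (u⬝Hu + 2 u⬝Fx) = d⬝Hd - 2 lam⬝(Gv-Gu)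
  have hvHu : v ⬝ᵥ H.mulVec u = -(v ⬝ᵥ F.mulVec x) - v ⬝ᵥ Gᵀ.mulVec lam := by
    rw [hHu]; simp [dotProduct_sub, dotProduct_neg]
  have huHu : u ⬝ᵥ H.mulVec u = -(u ⬝ᵥ F.mulVec x) - u ⬝ᵥ Gᵀ.mulVec lam := by
    rw [hHu]; simp [dotProduct_sub, dotProduct_neg]
  have hdGt : d ⬝ᵥ Gᵀ.mulVec lam = v ⬝ᵥ Gᵀ.mulVec lam - u ⬝ᵥ Gᵀ.mulVec lam := by
    simp [hd_def, sub_dotProduct]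
  have hkey : v ⬝ᵥ H.mulVec v + 2 * (v ⬝ᵥ F.mulVec x)
      - (u ⬝ᵥ H.mulVec u + 2 * (u ⬝ᵥ F.mulVec x))
      = d ⬝ᵥ H.mulVec d - 2 * (lam ⬝ᵥ (G.mulVec v - G.mulVec u)) := by
    rw [← hdotGt, hexp, hdGt, hvHu, huHu]
    ring
  linarith [hkey, hpos, hlamle]
end

section
/- Let H ∈ ℝ^{N×N} be symmetric positive definite, F ∈ ℝ^{N×n}, G ∈ ℝ^{c×N}, S_u ∈ ℝ^{c×n}, w ∈ ℝ^{c}, x ∈ ℝ^{n}, and set S = S_u + G H⁻¹ F. If y₁, y₂ ∈ ℝ^{c} both satisfy the implicit equation y − (I − G H⁻¹ Gᵀ) r(y) = −(S x + w), where r is the componentwise ReLU, then Gᵀ r(y₁) = Gᵀ r(y₂); consequently the two associated control inputs coincide: −H⁻¹ F x − H⁻¹ Gᵀ r(y₁) = −H⁻¹ F x − H⁻¹ Gᵀ r(y₂). -/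
open Matrix

theorem max_zero_sub_max_zero_mul_nonneg (a b : ℝ) :
    0 ≤ (max a 0 - max b 0) * ((a - b) - (max a 0 - max b 0)) := by
  rcases le_total a 0 with ha | ha <;> rcases le_total b 0 with hb | hb <;>
    simp only [max_eq_left, max_eq_right, ha, hb] <;> nlinarith

theorem relu_sub_dotProduct_nonneg {c : ℕ} (y₁ y₂ : Fin c → ℝ) :
    0 ≤ (relu y₁ - relu y₂) ⬝ᵥ (y₁ - y₂ - (relu y₁ - relu y₂)) :=
  Finset.sum_nonneg fun i _ => max_zero_sub_max_zero_mul_nonneg (y₁ i) (y₂ i)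

theorem relu_sub_dotProduct_mulVec_nonpos {c : ℕ} {A : Matrix (Fin c) (Fin c) ℝ}
    {b y₁ y₂ : Fin c → ℝ}
    (hy₁ : y₁ - (1 - A) *ᵥ relu y₁ = b) (hy₂ : y₂ - (1 - A) *ᵥ relu y₂ = b) :
    (relu y₁ - relu y₂) ⬝ᵥ A *ᵥ (relu y₁ - relu y₂) ≤ 0 := by
  set d := relu y₁ - relu y₂
  have hy : y₁ - y₂ - d = -(A *ᵥ d) := by
    have h : y₁ - y₂ = (1 - A) *ᵥ d := by
      rw [mulVec_sub]
      linear_combination hy₁ - hy₂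
    rw [h, sub_mulVec, one_mulVec]
    abel
  have := relu_sub_dotProduct_nonneg y₁ y₂
  rw [hy, dotProduct_neg] at this
  linarith

theorem Matrix.PosDef.transpose_mulVec_eq_zero_of_dotProduct_conj_nonpos
    {m k : Type*} [Fintype m] [Fintype k] {M : Matrix m m ℝ} (hM : M.PosDef)
    (G : Matrix k m ℝ) {d : k → ℝ} (hd : d ⬝ᵥ (G * M * Gᵀ) *ᵥ d ≤ 0) :
    Gᵀ *ᵥ d = 0 := by
  by_contra hne
  have hpos := hM.dotProduct_mulVec_pos hne
  rw [← mulVec_mulVec, ← mulVec_mulVec, dotProduct_mulVec, ← mulVec_transpose] at hd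
  simp only [star_trivial] at hpos
  linarith

theorem implicit_eq_solutions_same_control_general {N n c : ℕ}
    (H : Matrix (Fin N) (Fin N) ℝ) (F : Matrix (Fin N) (Fin n) ℝ)
    (G : Matrix (Fin c) (Fin N) ℝ)
    (w : Fin c → ℝ) (x : Fin n → ℝ)
    (hH : H.PosDef)
    (S : Matrix (Fin c) (Fin n) ℝ)
    (y₁ y₂ : Fin c → ℝ)
    (hy₁ : y₁ - (1 - G * H⁻¹ * Gᵀ).mulVec (relu y₁) = -(S.mulVec x + w))
    (hy₂ : y₂ - (1 - G * H⁻¹ * Gᵀ).mulVec (relu y₂) = -(S.mulVec x + w)) :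
    Gᵀ.mulVec (relu y₁) = Gᵀ.mulVec (relu y₂) ∧
    -(H⁻¹.mulVec (F.mulVec x)) - H⁻¹.mulVec (Gᵀ.mulVec (relu y₁)) =
      -(H⁻¹.mulVec (F.mulVec x)) - H⁻¹.mulVec (Gᵀ.mulVec (relu y₂)) := by
  have hGd : Gᵀ *ᵥ (relu y₁ - relu y₂) = 0 :=
    hH.inv.transpose_mulVec_eq_zero_of_dotProduct_conj_nonpos G
      (relu_sub_dotProduct_mulVec_nonpos hy₁ hy₂)
  have hGr : Gᵀ *ᵥ relu y₁ = Gᵀ *ᵥ relu y₂ := by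
    rwa [mulVec_sub, sub_eq_zero] at hGd
  exact ⟨hGr, by rw [hGr]⟩

/-- Any two solutions `y₁, y₂` of the implicit equation
`y - (I - G H⁻¹ Gᵀ) r(y) = -(S x + w)` satisfy `Gᵀ r(y₁) = Gᵀ r(y₂)`, hence yield the
same control input `-H⁻¹ F x - H⁻¹ Gᵀ r(y)`. -/
theorem implicit_eq_solutions_same_control {N n c : ℕ}
    (H : Matrix (Fin N) (Fin N) ℝ) (F : Matrix (Fin N) (Fin n) ℝ)
    (G : Matrix (Fin c) (Fin N) ℝ) (Su : Matrix (Fin c) (Fin n) ℝ)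
    (w : Fin c → ℝ) (x : Fin n → ℝ)
    (hH : H.PosDef)
    (S : Matrix (Fin c) (Fin n) ℝ) (hS : S = Su + G * H⁻¹ * F)
    (y₁ y₂ : Fin c → ℝ)
    (hy₁ : y₁ - (1 - G * H⁻¹ * Gᵀ).mulVec (relu y₁) = -(S.mulVec x + w))
    (hy₂ : y₂ - (1 - G * H⁻¹ * Gᵀ).mulVec (relu y₂) = -(S.mulVec x + w)) :
    Gᵀ.mulVec (relu y₁) = Gᵀ.mulVec (relu y₂) ∧
    -(H⁻¹.mulVec (F.mulVec x)) - H⁻¹.mulVec (Gᵀ.mulVec (relu y₁)) =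
      -(H⁻¹.mulVec (F.mulVec x)) - H⁻¹.mulVec (Gᵀ.mulVec (relu y₂)) :=
  implicit_eq_solutions_same_control_general H F G w x hH S y₁ y₂ hy₁ hy₂
end
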